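/- Let M : M_{d_A}(ℂ) → M_{d_B}(ℂ) be a quantum channel and suppose there exist constants 0 < λ_min ≤ λ_max < ∞ such that λ_min·I ≤ M(ρ) ≤ λ_max·I for every density matrix ρ on ℂ^{d_A}. Then for all density matrices ρ, σ on ℂ^{d_A}: (1/(2λ_max)) · ‖M(ρ−σ)‖₂² ≤ D(M(ρ)‖M(σ)) ≤ (1/(2λ_min)) · ‖M(ρ−σ)‖₂². -/

import Mathlib

/-!
Write `A = M ρ` and `B = M σ` in orthonormal eigenbases `(aᵢ, uᵢ)`, `(bⱼ, vⱼ)` and put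
`pᵢⱼ = |⟨uᵢ, vⱼ⟩|² ≥ 0`. Then `Tr (f(A) g(B)) = ∑ pᵢⱼ f(aᵢ) g(bⱼ)`, so, since `Tr A = Tr B`,
`D(A‖B) = ∑ pᵢⱼ (aᵢ (log aᵢ - log bⱼ) - (aᵢ - bⱼ))` and `‖A - B‖₂² = ∑ pᵢⱼ (aᵢ - bⱼ)²`.
The eigenvalues lie in `[λ_min, λ_max]`, and for `x, y` there the scalar term
`x (log x - log y) - (x - y) = ∫_y^x (x - t) / t dt` lies between `(x - y)² / (2 λ_max)` and
`(x - y)² / (2 λ_min)`, comparing `1 / t` with `1 / λ_max` and `1 / λ_min`.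
-/

open scoped Matrix ENNReal ComplexOrder

noncomputable section

namespace RDPI

/-- A density matrix: positive semidefinite with trace one. -/
def IsDensity {d : ℕ} (ρ : Matrix (Fin d) (Fin d) ℂ) : Prop :=
  ρ.PosSemidef ∧ ρ.trace = 1

/-- The support (column space / range) of a matrix. -/
def supp {d : ℕ} (ρ : Matrix (Fin d) (Fin d) ℂ) : Submodule ℂ (Fin d → ℂ) :=
  LinearMap.range ρ.mulVecLin

/-- The Choi matrix `∑ᵢⱼ Eᵢⱼ ⊗ N(Eᵢⱼ)` of a linear map between matrix algebras. -/
def choi {dA dB : ℕ} (N : Matrix (Fin dA) (Fin dA) ℂ →ₗ[ℂ] Matrix (Fin dB) (Fin dB) ℂ) :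
    Matrix (Fin dA × Fin dB) (Fin dA × Fin dB) ℂ :=
  fun p q => N (Matrix.single p.1 q.1 1) p.2 q.2

/-- A quantum channel: completely positive (PSD Choi matrix) and trace preserving. -/
def IsQChannel {dA dB : ℕ}
    (N : Matrix (Fin dA) (Fin dA) ℂ →ₗ[ℂ] Matrix (Fin dB) (Fin dB) ℂ) : Prop :=
  (choi N).PosSemidef ∧ ∀ ρ, (N ρ).trace = ρ.trace

/-- Functional-calculus logarithm of a Hermitian matrix, taken on its support
(recall `Real.log 0 = 0`). Junk value `0` for non-Hermitian inputs. -/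
def matLog {d : ℕ} (A : Matrix (Fin d) (Fin d) ℂ) : Matrix (Fin d) (Fin d) ℂ :=
  if hA : A.IsHermitian then
    (hA.eigenvectorUnitary : Matrix (Fin d) (Fin d) ℂ) *
      Matrix.diagonal (fun i => (Real.log (hA.eigenvalues i) : ℂ)) *
      star (hA.eigenvectorUnitary : Matrix (Fin d) (Fin d) ℂ)
  else 0

open scoped Classical in
/-- Quantum relative entropy `D(ρ‖σ)`, valued in `[0,∞]`. -/
def relEnt {d : ℕ} (ρ σ : Matrix (Fin d) (Fin d) ℂ) : ℝ≥0∞ :=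
  if supp ρ ≤ supp σ then ENNReal.ofReal ((ρ * (matLog ρ - matLog σ)).trace.re) else ⊤

/-- The BKM metric `g_σ(X) = ∫₀^∞ Tr(X† (σ+r)⁻¹ X (σ+r)⁻¹) dr`, valued in `[0,∞]`. -/
def bkm {d : ℕ} (σ X : Matrix (Fin d) (Fin d) ℂ) : ℝ≥0∞ :=
  ∫⁻ r in Set.Ioi (0 : ℝ),
    ENNReal.ofReal ((Xᴴ * (σ + (r : ℂ) • 1)⁻¹ * X * (σ + (r : ℂ) • 1)⁻¹).trace.re)

end RDPI

open Set intervalIntegral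

theorem intervalIntegral.integral_sub_mul_nonneg {g : ℝ → ℝ} {x y : ℝ}
    (hg : ∀ t ∈ uIcc y x, 0 ≤ g t) : 0 ≤ ∫ t in y..x, (x - t) * g t := by
  rcases le_total y x with hyx | hxy
  · refine integral_nonneg hyx fun t ht => mul_nonneg (sub_nonneg.2 ht.2) (hg t ?_)
    rwa [uIcc_of_le hyx]
  · rw [integral_symm, ← integral_neg]
    refine integral_nonneg hxy fun t ht => ?_
    rw [← neg_mul, neg_sub]
    exact mul_nonneg (sub_nonneg.2 ht.1) (hg t (by rwa [uIcc_of_ge hxy]))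

namespace Matrix

variable {n 𝕜 : Type*} [RCLike 𝕜]

theorem isHermitian_of_posSemidef_sub_smul_one [DecidableEq n] {A : Matrix n n 𝕜} {m : ℝ}
    (h : (A - (m : 𝕜) • 1).PosSemidef) : A.IsHermitian := by
  simpa using h.isHermitian.add (isHermitian_one.smul (RCLike.conj_ofReal (K := 𝕜) m))

variable [Fintype n]

theorem trace_conj_mul_conj (U D V E : Matrix n n 𝕜) :
    (U * D * star U * (V * E * star V)).trace = (D * (star U * V) * E * (star U * V)ᴴ).trace := by
  rw [conjTranspose_mul, ← star_eq_conjTranspose, ← star_eq_conjTranspose, star_star,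
    show U * D * star U * (V * E * star V) = U * (D * star U * V * E * star V) by noncomm_ring,
    trace_mul_comm]
  congr 1
  noncomm_ring

variable [DecidableEq n]

theorem trace_diagonal_mul_mul_diagonal_mul_conjTranspose (d e : n → 𝕜) (W : Matrix n n 𝕜) :
    (diagonal d * W * diagonal e * Wᴴ).trace = ∑ i, ∑ j, d i * e j * (‖W i j‖ ^ 2 : ℝ) := by
  simp only [trace, diag_apply, mul_apply, diagonal_apply, conjTranspose_apply, ite_mul, zero_mul,
    mul_ite, mul_zero, Finset.sum_ite_eq, Finset.sum_ite_eq', Finset.mem_univ, if_true]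
  refine Finset.sum_congr rfl fun i _ => Finset.sum_congr rfl fun j _ => ?_
  rw [RCLike.ofReal_pow, ← RCLike.mul_conj, RCLike.star_def]
  ring

namespace IsHermitian

variable {A B : Matrix n n 𝕜} (hA : A.IsHermitian) (hB : B.IsHermitian)

open scoped MatrixOrder in
theorem eigenvalues_mem_Icc {m M : ℝ} (hm : (A - (m : 𝕜) • 1).PosSemidef)
    (hM : ((M : 𝕜) • 1 - A).PosSemidef) (i : n) : hA.eigenvalues i ∈ Icc m M := by
  have halgebraMap (r : ℝ) : algebraMap ℝ (Matrix n n 𝕜) r = (r : 𝕜) • 1 := by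
    rw [Algebra.algebraMap_eq_smul_one, RCLike.real_smul_eq_coe_smul (K := 𝕜)]
  have hspec := hA.eigenvalues_mem_spectrum_real i
  rw [← halgebraMap, ← le_iff] at hm hM
  exact ⟨(algebraMap_le_iff_le_spectrum hA.isSelfAdjoint).1 hm _ hspec,
    (le_algebraMap_iff_spectrum_le hA.isSelfAdjoint).1 hM _ hspec⟩

def overlap (i j : n) : ℝ :=
  ‖(star (hA.eigenvectorUnitary : Matrix n n 𝕜) * (hB.eigenvectorUnitary : Matrix n n 𝕜)) i j‖ ^ 2

theorem overlap_nonneg (i j : n) : 0 ≤ hA.overlap hB i j := sq_nonneg _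

theorem cfc_id_eq : hA.cfc id = A := hA.spectral_theorem.symm

theorem cfc_one_eq : hA.cfc 1 = 1 := by
  rw [← cfc_eq, cfc_one ℝ A hA.isSelfAdjoint]

theorem cfc_mul_cfc (f g : ℝ → ℝ) : hA.cfc f * hA.cfc g = hA.cfc (f * g) := by
  rw [IsHermitian.cfc, IsHermitian.cfc, IsHermitian.cfc, ← map_mul, diagonal_mul_diagonal]
  congr 2
  ext i
  simp

theorem trace_cfc_mul_cfc (f g : ℝ → ℝ) :
    (hA.cfc f * hB.cfc g).trace =
      ((∑ i, ∑ j, hA.overlap hB i j * f (hA.eigenvalues i) * g (hB.eigenvalues j) : ℝ) : 𝕜) := by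
  rw [IsHermitian.cfc, IsHermitian.cfc, Unitary.conjStarAlgAut_apply,
    Unitary.conjStarAlgAut_apply, trace_conj_mul_conj,
    trace_diagonal_mul_mul_diagonal_mul_conjTranspose]
  simp only [Function.comp_apply, overlap]
  push_cast
  refine Finset.sum_congr rfl fun i _ => Finset.sum_congr rfl fun j _ => ?_
  ring

theorem trace_conjTranspose_sub_mul_sub :
    ((A - B)ᴴ * (A - B)).trace =
      ((∑ i, ∑ j, hA.overlap hB i j * (hA.eigenvalues i - hB.eigenvalues j) ^ 2 : ℝ) : 𝕜) := by
  have hAA : (A * A).trace = (hA.cfc (id * id) * hB.cfc 1).trace := by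
    rw [← cfc_mul_cfc, cfc_id_eq, cfc_one_eq, mul_one]
  have hAB : (A * B).trace = (hA.cfc id * hB.cfc id).trace := by
    rw [cfc_id_eq, cfc_id_eq]
  have hBB : (B * B).trace = (hA.cfc 1 * hB.cfc (id * id)).trace := by
    rw [← cfc_mul_cfc, cfc_id_eq, cfc_one_eq, one_mul]
  have hexpand : (A - B)ᴴ * (A - B) = A * A - A * B - B * A + B * B := by
    rw [(hA.sub hB).eq]
    noncomm_ring
  rw [hexpand, trace_add, trace_sub, trace_sub, trace_mul_comm B A, hAA, hAB, hBB,
    trace_cfc_mul_cfc, trace_cfc_mul_cfc, trace_cfc_mul_cfc, ← RCLike.ofReal_sub,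
    ← RCLike.ofReal_sub, ← RCLike.ofReal_add]
  congr 1
  simp only [← Finset.sum_sub_distrib, ← Finset.sum_add_distrib]
  refine Finset.sum_congr rfl fun i _ => Finset.sum_congr rfl fun j _ => ?_
  simp only [Pi.mul_apply, Pi.one_apply, id]
  ring

end IsHermitian

end Matrix

namespace RDPI

open Matrix

def scalarRelEnt (x y : ℝ) : ℝ := x * (Real.log x - Real.log y) - (x - y)

theorem scalarRelEnt_eq_integral {x y : ℝ} (hx : 0 < x) (hy : 0 < y) :
    scalarRelEnt x y = ∫ t in y..x, (x - t) * t⁻¹ := by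
  have hpos : ∀ t ∈ uIcc y x, 0 < t := fun t ht => (lt_inf_iff.2 ⟨hy, hx⟩).trans_le ht.1
  have hderiv : ∀ t ∈ uIcc y x, HasDerivAt (fun t => x * Real.log t - t) ((x - t) * t⁻¹) t := by
    intro t ht
    have ht0 := (hpos t ht).ne'
    exact (((Real.hasDerivAt_log ht0).const_mul x).sub (hasDerivAt_id t)).congr_deriv
      (by field_simp)
  have hcont : ContinuousOn (fun t => (x - t) * t⁻¹) (uIcc y x) :=
    (continuousOn_const.sub continuousOn_id).mul
      (continuousOn_inv₀.mono fun t ht => (hpos t ht).ne')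
  rw [integral_eq_sub_of_hasDerivAt hderiv hcont.intervalIntegrable, scalarRelEnt]
  ring

theorem sq_sub_div_eq_integral (x y c : ℝ) :
    (x - y) ^ 2 / (2 * c) = ∫ t in y..x, (x - t) * c⁻¹ := by
  rw [integral_mul_const, integral_comp_sub_left (fun t => t), integral_id]
  ring

theorem scalarRelEnt_mem_Icc {m M x y : ℝ} (hm : 0 < m) (hx : x ∈ Icc m M) (hy : y ∈ Icc m M) :
    scalarRelEnt x y ∈ Icc ((x - y) ^ 2 / (2 * M)) ((x - y) ^ 2 / (2 * m)) := by
  have hIcc : ∀ t ∈ uIcc y x, m ≤ t ∧ t ≤ M := fun t ht => uIcc_subset_Icc hy hx ht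
  have hint : IntervalIntegrable (fun t => (x - t) * t⁻¹) MeasureTheory.volume y x :=
    ((continuousOn_const.sub continuousOn_id).mul
      (continuousOn_inv₀.mono fun t ht => (hm.trans_le (hIcc t ht).1).ne')).intervalIntegrable
  have hint' (c : ℝ) : IntervalIntegrable (fun t => (x - t) * c⁻¹) MeasureTheory.volume y x :=
    (by fun_prop : Continuous fun t => (x - t) * c⁻¹).intervalIntegrable y x
  rw [scalarRelEnt_eq_integral (hm.trans_le hx.1) (hm.trans_le hy.1), sq_sub_div_eq_integral,
    sq_sub_div_eq_integral]
  constructor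
  · rw [← sub_nonneg, ← integral_sub hint (hint' M)]
    simp only [← mul_sub]
    exact integral_sub_mul_nonneg fun t ht =>
      sub_nonneg.2 (inv_anti₀ (hm.trans_le (hIcc t ht).1) (hIcc t ht).2)
  · rw [← sub_nonneg, ← integral_sub (hint' m) hint]
    simp only [← mul_sub]
    exact integral_sub_mul_nonneg fun t ht => sub_nonneg.2 (inv_anti₀ hm (hIcc t ht).1)

variable {d : ℕ} {A B : Matrix (Fin d) (Fin d) ℂ}

theorem matLog_eq_cfc (hA : A.IsHermitian) : matLog A = hA.cfc Real.log := by
  rw [matLog, dif_pos hA, IsHermitian.cfc, Unitary.conjStarAlgAut_apply]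
  rfl

theorem re_trace_mul_matLog_sub_sub (hA : A.IsHermitian) (hB : B.IsHermitian) :
    (A * (matLog A - matLog B) - (A - B)).trace.re =
      ∑ i, ∑ j, hA.overlap hB i j * scalarRelEnt (hA.eigenvalues i) (hB.eigenvalues j) := by
  have hAlogA : (A * matLog A).trace = (hA.cfc (id * Real.log) * hB.cfc 1).trace := by
    rw [← hA.cfc_mul_cfc, hA.cfc_id_eq, hB.cfc_one_eq, mul_one, matLog_eq_cfc hA]
  have hAlogB : (A * matLog B).trace = (hA.cfc id * hB.cfc Real.log).trace := by
    rw [hA.cfc_id_eq, matLog_eq_cfc hB]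
  have hA' : A.trace = (hA.cfc id * hB.cfc 1).trace := by
    rw [hA.cfc_id_eq, hB.cfc_one_eq, mul_one]
  have hB' : B.trace = (hA.cfc 1 * hB.cfc id).trace := by
    rw [hA.cfc_one_eq, hB.cfc_id_eq, one_mul]
  rw [← RCLike.re_to_complex, Matrix.mul_sub, trace_sub, trace_sub, trace_sub, hAlogA, hAlogB,
    hA', hB', hA.trace_cfc_mul_cfc, hA.trace_cfc_mul_cfc, hA.trace_cfc_mul_cfc,
    hA.trace_cfc_mul_cfc, ← RCLike.ofReal_sub, ← RCLike.ofReal_sub, ← RCLike.ofReal_sub,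
    RCLike.ofReal_re]
  simp only [← Finset.sum_sub_distrib]
  refine Finset.sum_congr rfl fun i _ => Finset.sum_congr rfl fun j _ => ?_
  simp only [Pi.mul_apply, Pi.one_apply, id, scalarRelEnt]
  ring

theorem relEnt_of_isUnit (hB : IsUnit B) :
    relEnt A B = ENNReal.ofReal ((A * (matLog A - matLog B)).trace.re) := by
  have hsupp : supp B = ⊤ := by
    rw [supp, LinearMap.range_eq_top]
    exact mulVec_surjective_iff_isUnit.mpr hB
  rw [relEnt, if_pos (hsupp ▸ le_top)]

theorem relEnt_mem_Icc_of_eigenvalues_mem_Icc (hA : A.IsHermitian) (hB : B.IsHermitian)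
    {m M : ℝ} (hm : 0 < m) (ha : ∀ i, hA.eigenvalues i ∈ Icc m M)
    (hb : ∀ j, hB.eigenvalues j ∈ Icc m M) (htr : A.trace = B.trace) :
    relEnt A B ∈ Icc (ENNReal.ofReal (((A - B)ᴴ * (A - B)).trace.re / (2 * M)))
      (ENNReal.ofReal (((A - B)ᴴ * (A - B)).trace.re / (2 * m))) := by
  have hBunit : IsUnit B := (hB.posDef_iff_eigenvalues_pos.2 fun j => hm.trans_le (hb j).1).isUnit
  have hD : (A * (matLog A - matLog B)).trace.re =
      ∑ i, ∑ j, hA.overlap hB i j * scalarRelEnt (hA.eigenvalues i) (hB.eigenvalues j) := by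
    rw [← re_trace_mul_matLog_sub_sub hA hB, trace_sub (A * _), trace_sub A, htr, sub_self,
      sub_zero]
  have hF : ((A - B)ᴴ * (A - B)).trace.re =
      ∑ i, ∑ j, hA.overlap hB i j * (hA.eigenvalues i - hB.eigenvalues j) ^ 2 := by
    rw [← RCLike.re_to_complex, hA.trace_conjTranspose_sub_mul_sub hB, RCLike.ofReal_re]
  rw [relEnt_of_isUnit hBunit, hD, hF]
  simp only [Finset.sum_div, mul_div_assoc]
  constructor <;> refine ENNReal.ofReal_le_ofReal
    (Finset.sum_le_sum fun i _ => Finset.sum_le_sum fun j _ =>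
      mul_le_mul_of_nonneg_left ?_ (hA.overlap_nonneg hB i j))
  exacts [(scalarRelEnt_mem_Icc hm (ha i) (hb j)).1, (scalarRelEnt_mem_Icc hm (ha i) (hb j)).2]

theorem strictly_positive_channel_bounds_general {dA dB : ℕ}
    (M : Matrix (Fin dA) (Fin dA) ℂ →ₗ[ℂ] Matrix (Fin dB) (Fin dB) ℂ)
    (hM : IsQChannel M) {lmin lmax : ℝ} (hmin : 0 < lmin)
    (hbound : ∀ ρ : Matrix (Fin dA) (Fin dA) ℂ, IsDensity ρ →
      (M ρ - (lmin : ℂ) • (1 : Matrix (Fin dB) (Fin dB) ℂ)).PosSemidef ∧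
      ((lmax : ℂ) • (1 : Matrix (Fin dB) (Fin dB) ℂ) - M ρ).PosSemidef) :
    ∀ ρ σ : Matrix (Fin dA) (Fin dA) ℂ, IsDensity ρ → IsDensity σ →
      ENNReal.ofReal ((((M ρ - M σ)ᴴ * (M ρ - M σ)).trace.re) / (2 * lmax))
          ≤ relEnt (M ρ) (M σ) ∧
      relEnt (M ρ) (M σ) ≤
        ENNReal.ofReal ((((M ρ - M σ)ᴴ * (M ρ - M σ)).trace.re) / (2 * lmin)) := by
  intro ρ σ hρ hσ
  obtain ⟨hρmin, hρmax⟩ := hbound ρ hρ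
  obtain ⟨hσmin, hσmax⟩ := hbound σ hσ
  have hA := isHermitian_of_posSemidef_sub_smul_one hρmin
  have hB := isHermitian_of_posSemidef_sub_smul_one hσmin
  exact relEnt_mem_Icc_of_eigenvalues_mem_Icc hA hB hmin (hA.eigenvalues_mem_Icc hρmin hρmax)
    (hB.eigenvalues_mem_Icc hσmin hσmax) (by rw [hM.2, hM.2, hρ.2, hσ.2])

/-- two-sided Hilbert–Schmidt bounds on the relative entropy for a
strictly positive channel. -/
theorem strictly_positive_channel_bounds {dA dB : ℕ}
    (M : Matrix (Fin dA) (Fin dA) ℂ →ₗ[ℂ] Matrix (Fin dB) (Fin dB) ℂ)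
    (hM : IsQChannel M) {lmin lmax : ℝ} (hmin : 0 < lmin) (hminmax : lmin ≤ lmax)
    (hbound : ∀ ρ : Matrix (Fin dA) (Fin dA) ℂ, IsDensity ρ →
      (M ρ - (lmin : ℂ) • (1 : Matrix (Fin dB) (Fin dB) ℂ)).PosSemidef ∧
      ((lmax : ℂ) • (1 : Matrix (Fin dB) (Fin dB) ℂ) - M ρ).PosSemidef) :
    ∀ ρ σ : Matrix (Fin dA) (Fin dA) ℂ, IsDensity ρ → IsDensity σ →
      ENNReal.ofReal ((((M ρ - M σ)ᴴ * (M ρ - M σ)).trace.re) / (2 * lmax))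
          ≤ relEnt (M ρ) (M σ) ∧
      relEnt (M ρ) (M σ) ≤
        ENNReal.ofReal ((((M ρ - M σ)ᴴ * (M ρ - M σ)).trace.re) / (2 * lmin)) :=
  strictly_positive_channel_bounds_general M hM hmin hbound

end RDPI
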